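/- arXiv:2011.07882 — 4 statements merged into one kernel-verified Lean document; each statement's English description precedes it below -/
import Mathlib

section
/- For the Grim Reaper curve γ(s) = -log(cos s) - i·s with s ∈ (-π/2, π/2), the curvature vector of γ equals the projection of the constant vector T = -1 ∈ ℂ onto the normal direction of γ, with opposite sign; that is, γ is a translating soliton of curve shortening flow with velocity T = -1: k + ⟨T, N⟩ = 0, where k is the signed curvature and N the unit normal. -/
/-! On `(-π/2, π/2)` we have `γ' = tan s - i` and `γ'' = sec² s`, so `|γ'| = sec s`, the signed
curvature is `k = cos s` and the unit normal is `N = e^{is}`. Hence `⟨-1, N⟩ = -cos s = -k`. -/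

/-- The Grim Reaper curve `γ(s) = -log(cos s) - i·s`. -/
noncomputable def grimReaperCurve (s : ℝ) : ℂ :=
  -(Real.log (Real.cos s) : ℂ) - Complex.I * (s : ℂ)

/-- Signed curvature of a plane curve: `k = det(γ', γ'')/|γ'|³`. -/
noncomputable def grimCurvature (s : ℝ) : ℝ :=
  ((deriv grimReaperCurve s).re * (deriv (deriv grimReaperCurve) s).im -
      (deriv grimReaperCurve s).im * (deriv (deriv grimReaperCurve) s).re) /
    ‖deriv grimReaperCurve s‖ ^ 3

/-- The unit normal `N = i·γ'/|γ'|`. -/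
noncomputable def grimNormal (s : ℝ) : ℂ :=
  Complex.I * deriv grimReaperCurve s / (‖deriv grimReaperCurve s‖ : ℂ)

theorem hasDerivAt_grimReaperCurve {s : ℝ} (hs : Real.cos s ≠ 0) :
    HasDerivAt grimReaperCurve (Real.tan s - Complex.I) s := by
  have hlog := ((Real.hasDerivAt_cos s).log hs).ofReal_comp
  have hlin : HasDerivAt (fun t : ℝ => Complex.I * t) Complex.I s := by
    simpa using Complex.ofRealCLM.hasDerivAt.const_mul Complex.I
  refine (hlog.neg.sub hlin).congr_deriv ?_
  rw [Real.tan_eq_sin_div_cos]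
  push_cast
  ring

theorem deriv_grimReaperCurve {s : ℝ} (hs : Real.cos s ≠ 0) :
    deriv grimReaperCurve s = Real.tan s - Complex.I :=
  (hasDerivAt_grimReaperCurve hs).deriv

theorem deriv_deriv_grimReaperCurve {s : ℝ} (hs : Real.cos s ≠ 0) :
    deriv (deriv grimReaperCurve) s = ((1 / Real.cos s ^ 2 : ℝ) : ℂ) := by
  have hderiv : deriv grimReaperCurve =ᶠ[nhds s] fun t => (Real.tan t : ℂ) - Complex.I :=
    (Real.continuous_cos.continuousAt.eventually_ne hs).mono fun t ht =>
      deriv_grimReaperCurve ht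
  rw [hderiv.deriv_eq]
  exact ((Real.hasDerivAt_tan hs).ofReal_comp.sub_const _).deriv

theorem norm_deriv_grimReaperCurve {s : ℝ} (hs : 0 < Real.cos s) :
    ‖deriv grimReaperCurve s‖ = (Real.cos s)⁻¹ := by
  rw [deriv_grimReaperCurve hs.ne', ← Real.inv_sqrt_one_add_tan_sq hs, inv_inv,
    show (Real.tan s : ℂ) - Complex.I = Real.tan s + (-1 : ℝ) * Complex.I by push_cast; ring,
    Complex.norm_add_mul_I, neg_one_sq, add_comm]

theorem grimCurvature_eq_cos {s : ℝ} (hs : 0 < Real.cos s) : grimCurvature s = Real.cos s := by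
  rw [grimCurvature, deriv_deriv_grimReaperCurve hs.ne', norm_deriv_grimReaperCurve hs,
    deriv_grimReaperCurve hs.ne']
  simp only [Complex.sub_re, Complex.sub_im, Complex.ofReal_re, Complex.ofReal_im,
    Complex.I_re, Complex.I_im]
  field_simp
  ring

theorem grimNormal_eq_exp {s : ℝ} (hs : 0 < Real.cos s) :
    grimNormal s = Complex.exp (s * Complex.I) := by
  have hcos : Complex.cos s ≠ 0 := mod_cast hs.ne'
  rw [grimNormal, norm_deriv_grimReaperCurve hs, deriv_grimReaperCurve hs.ne',
    Complex.exp_mul_I, Real.tan_eq_sin_div_cos]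
  push_cast
  field_simp
  linear_combination -Complex.cos s * Complex.I_sq

/-- The Grim Reaper curve is a translating soliton of curve shortening flow with
velocity `T = -1`: its signed curvature satisfies `k + ⟨T, N⟩ = 0`, where
`⟨T, N⟩ = Re(T·conj N)` is the normal component of `T`. -/
theorem grimReaper_is_translator :
    ∀ s ∈ Set.Ioo (-(Real.pi / 2)) (Real.pi / 2),
      grimCurvature s + (((-1 : ℂ)) * (starRingEnd ℂ) (grimNormal s)).re = 0 := by
  intro s hs
  have hcos : 0 < Real.cos s := Real.cos_pos_of_mem_Ioo hs
  rw [grimCurvature_eq_cos hcos, grimNormal_eq_exp hcos, neg_one_mul, Complex.neg_re,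
    Complex.conj_re, Complex.exp_ofReal_mul_I_re, add_neg_cancel]
end

section
/- Let F : L → ℂᵐ be a Lagrangian immersion with Lagrangian angle θ_L (with respect to Ω = dz₁∧⋯∧dzₘ) and mean curvature vector H_F = J∇θ_L. Fix T ∈ ℂᵐ. Then H_F + T^⊥ = 0 at every point if and only if the function θ_L - ⟨F, JT⟩ is constant on each connected component of L. -/
open scoped RealInnerProductSpace

/-- Let `F : L → ℂᵐ ≅ ℝ^{2m}` be a Lagrangian immersion with Lagrangian angle `θ`
and mean curvature vector `H = J F_*(∇θ)` (encoded by the identity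
`dθ(v) = ⟨H, J dF(v)⟩`), `J` the complex structure, `H` normal, and the tangent
spaces Lagrangian (`J(TₓL) = (TₓL)ᗮ`).  Then `H + T^⊥ = 0` everywhere iff
`θ - ⟨F, JT⟩` is constant (the domain, a normed space, is connected). -/
theorem translator_iff_phase_constant {m : ℕ} {L : Type*}
    [NormedAddCommGroup L] [InnerProductSpace ℝ L]
    (F H : L → EuclideanSpace ℝ (Fin (2 * m))) (θ : L → ℝ)
    (dF : L → (L →L[ℝ] EuclideanSpace ℝ (Fin (2 * m))))
    (J : EuclideanSpace ℝ (Fin (2 * m)) →ₗᵢ[ℝ] EuclideanSpace ℝ (Fin (2 * m)))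
    (T : EuclideanSpace ℝ (Fin (2 * m)))
    (hJ : ∀ v, J (J v) = -v)
    (hF : ∀ x, HasFDerivAt F (dF x) x)
    (hθ : ∀ x, HasFDerivAt θ
      ((innerSL ℝ (H x)).comp (J.toContinuousLinearMap.comp (dF x))) x)
    (hLag : ∀ x, (LinearMap.range ((dF x) : L →ₗ[ℝ] EuclideanSpace ℝ (Fin (2 * m)))).map
        J.toLinearMap
        = (LinearMap.range ((dF x) : L →ₗ[ℝ] EuclideanSpace ℝ (Fin (2 * m))))ᗮ)
    (hH : ∀ x, H x ∈ (LinearMap.range ((dF x) : L →ₗ[ℝ] EuclideanSpace ℝ (Fin (2 * m))))ᗮ) :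
    (∀ x, H x + (T - (Submodule.orthogonalProjectionOnto
        (LinearMap.range ((dF x) : L →ₗ[ℝ] EuclideanSpace ℝ (Fin (2 * m)))) T :
        EuclideanSpace ℝ (Fin (2 * m)))) = 0)
      ↔ ∃ c : ℝ, ∀ x, θ x - ⟪F x, J T⟫ = c := by
  -- J is skew-adjoint
  have hskew : ∀ u w : EuclideanSpace ℝ (Fin (2 * m)), ⟪J u, w⟫ = -⟪u, J w⟫ := by
    intro u w
    have h1 := J.inner_map_map u (J w)
    rw [hJ w, inner_neg_right] at h1
    linarith
  -- derivative of x ↦ ⟪F x, J T⟫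
  have hψ : ∀ x, HasFDerivAt (fun y => ⟪F y, J T⟫)
      ((innerSL ℝ (J T)).comp (dF x)) x := by
    intro x
    have h2 := ((innerSL ℝ (J T)).hasFDerivAt (x := F x)).comp x (hF x)
    have heq : (fun y => ⟪F y, J T⟫) = (innerSL ℝ (J T)) ∘ F := by
      funext y
      simp only [Function.comp_apply, innerSL_apply_apply, real_inner_comm]
    rw [heq]
    exact h2
  have hφ : ∀ x, HasFDerivAt (fun y => θ y - ⟪F y, J T⟫)
      (((innerSL ℝ (H x)).comp (J.toContinuousLinearMap.comp (dF x)))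
        - ((innerSL ℝ (J T)).comp (dF x))) x :=
    fun x => (hθ x).sub (hψ x)
  -- the value of the derivative
  have hDval : ∀ x v,
      (((innerSL ℝ (H x)).comp (J.toContinuousLinearMap.comp (dF x)))
        - ((innerSL ℝ (J T)).comp (dF x))) v
      = ⟪H x + (T - (Submodule.orthogonalProjectionOnto
          (LinearMap.range ((dF x) : L →ₗ[ℝ] EuclideanSpace ℝ (Fin (2 * m)))) T :
          EuclideanSpace ℝ (Fin (2 * m)))), J (dF x v)⟫ := by
    intro x v
    have hmemJ : J (dF x v) ∈
        (LinearMap.range ((dF x) : L →ₗ[ℝ] EuclideanSpace ℝ (Fin (2 * m))))ᗮ := by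
      rw [← hLag x]
      exact Submodule.mem_map_of_mem (LinearMap.mem_range_self _ v)
    have hproj : ⟪((Submodule.orthogonalProjectionOnto
        (LinearMap.range ((dF x) : L →ₗ[ℝ] EuclideanSpace ℝ (Fin (2 * m)))) T) :
        EuclideanSpace ℝ (Fin (2 * m))), J (dF x v)⟫ = 0 :=
      hmemJ _ (Submodule.orthogonalProjectionOnto _ T).2
    have hsk : ⟪J T, dF x v⟫ = -⟪T, J (dF x v)⟫ := hskew T (dF x v)
    simp only [ContinuousLinearMap.sub_apply, ContinuousLinearMap.coe_comp',
      Function.comp_apply, innerSL_apply_apply, LinearIsometry.coe_toContinuousLinearMap,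
      inner_add_left, inner_sub_left, hproj]
    rw [hsk]
    ring
  constructor
  · intro h0
    rcases isEmpty_or_nonempty L with hL | hL
    · exact ⟨0, fun x => (IsEmpty.false x).elim⟩
    have hDzero : ∀ x,
        (((innerSL ℝ (H x)).comp (J.toContinuousLinearMap.comp (dF x)))
          - ((innerSL ℝ (J T)).comp (dF x))) = 0 := by
      intro x
      ext v
      rw [hDval x v, h0 x]
      simp
    have hdiff : Differentiable ℝ (fun y => θ y - ⟪F y, J T⟫) :=
      fun x => (hφ x).differentiableAt
    have hfd : ∀ x, fderiv ℝ (fun y => θ y - ⟪F y, J T⟫) x = 0 := by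
      intro x
      rw [(hφ x).fderiv, hDzero x]
    obtain ⟨x₀⟩ := hL
    have key := is_const_of_fderiv_eq_zero (𝕜 := ℝ) hdiff hfd
    exact ⟨θ x₀ - ⟪F x₀, J T⟫, fun x => key x x₀⟩
  · rintro ⟨c, hc⟩ x
    have hconst : HasFDerivAt (fun y => θ y - ⟪F y, J T⟫) (0 : L →L[ℝ] ℝ) x := by
      have heq : (fun y => θ y - ⟪F y, J T⟫) = fun _ => c := funext hc
      rw [heq]
      exact hasFDerivAt_const c x
    have hDzero := (hφ x).unique hconst
    have hzero : ∀ v, ⟪H x + (T - (Submodule.orthogonalProjectionOnto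
        (LinearMap.range ((dF x) : L →ₗ[ℝ] EuclideanSpace ℝ (Fin (2 * m)))) T :
        EuclideanSpace ℝ (Fin (2 * m)))), J (dF x v)⟫ = 0 := by
      intro v
      rw [← hDval x v, hDzero]
      rfl
    have hNperp : H x + (T - (Submodule.orthogonalProjectionOnto
        (LinearMap.range ((dF x) : L →ₗ[ℝ] EuclideanSpace ℝ (Fin (2 * m)))) T :
        EuclideanSpace ℝ (Fin (2 * m)))) ∈
        (LinearMap.range ((dF x) : L →ₗ[ℝ] EuclideanSpace ℝ (Fin (2 * m))))ᗮ :=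
      Submodule.add_mem _ (hH x)
        (Submodule.sub_starProjection_mem_orthogonal T)
    rw [← hLag x] at hNperp
    obtain ⟨u, hu, huN⟩ := hNperp
    obtain ⟨w, hw⟩ := hu
    have hJw : J ((dF x) w) = H x + (T - (Submodule.orthogonalProjectionOnto
        (LinearMap.range ((dF x) : L →ₗ[ℝ] EuclideanSpace ℝ (Fin (2 * m)))) T :
        EuclideanSpace ℝ (Fin (2 * m)))) := by
      have h := huN
      rw [← hw] at h
      exact h
    have h0' := hzero w
    rw [← hJw] at h0'
    have hz : J ((dF x) w) = 0 := inner_self_eq_zero.mp h0'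
    rw [← hJw, hz]
end

section
/- Given angles φ = (φ₁,…,φₘ) ∈ (0,π)ᵐ and λ ∈ ℝ, let L₀ be the Grim Reaper cylinder F₀(x₁,…,xₘ) = (x₁,…,x_{m-1}, -log cos(xₘ) - i(xₘ - π/2)) and let L_φ^λ = P_{(φ,λ)}(L₀) where P_{(φ,λ)}(z₁,…,zₘ) = (e^{iφ₁}z₁,…,e^{iφ_{m-1}}z_{m-1}, zₘ + λ + iφₘ). Then L₀ and L_φ^λ intersect in exactly one point p, and p has the form (0,…,0,q) with q ∈ ℂ. -/
/-- The Grim Reaper cylinder `L₀ = {(x₁,…,x_{m-1}, γ₀(s))}` in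
`ℂᵐ = ℂ^{m-1} × ℂ`, where `γ₀(s) = -log cos s - i(s - π/2)`. -/
def grimCyl (k : ℕ) : Set ((Fin k → ℂ) × ℂ) :=
  {p | ∃ (x : Fin k → ℝ) (s : ℝ), s ∈ Set.Ioo (-(Real.pi / 2)) (Real.pi / 2) ∧
    p = (fun j => (x j : ℂ),
      -(Real.log (Real.cos s) : ℂ) - Complex.I * ((s : ℂ) - (Real.pi : ℂ) / 2))}

/-- The rotated and translated Grim Reaper cylinder
`L_φ^λ = P_{(φ,λ)}(L₀)`, `P_{(φ,λ)}(z) = (e^{iφ₁}z₁,…,e^{iφ_{m-1}}z_{m-1}, zₘ + λ + iφₘ)`. -/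
def grimCylRot (k : ℕ) (φ : Fin k → ℝ) (φm lam : ℝ) : Set ((Fin k → ℂ) × ℂ) :=
  {p | ∃ (x : Fin k → ℝ) (s : ℝ), s ∈ Set.Ioo (-(Real.pi / 2)) (Real.pi / 2) ∧
    p = (fun j => Complex.exp (Complex.I * (φ j : ℂ)) * (x j : ℂ),
      -(Real.log (Real.cos s) : ℂ) - Complex.I * ((s : ℂ) - (Real.pi : ℂ) / 2)
        + (lam : ℂ) + Complex.I * (φm : ℂ))}

/-!
A common point has real first coordinates `x` with `x = e^{iφ} y` for real `y`, which forces
`x = 0` because `sin φⱼ ≠ 0`. In the last coordinate, comparing imaginary parts gives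
`s₁ = s₀ + φₘ` and comparing real parts gives `cos (s₀ + φₘ) = e^λ cos s₀`, that is
`cos φₘ - sin φₘ tan s₀ = e^λ`. This pins down `s₀ = arctan ((cos φₘ - e^λ) / sin φₘ)`, and the
remaining constraint `s₀ + φₘ < π/2` holds automatically since `cos (s₀ + φₘ) > 0`.
-/

open Real Set

noncomputable def grimReaper (s : ℝ) : ℂ :=
  -(Real.log (Real.cos s) : ℂ) - Complex.I * ((s : ℂ) - (Real.pi : ℂ) / 2)

lemma grimReaper_eq_add_iff {s t lam φm : ℝ} :
    grimReaper s = grimReaper t + lam + Complex.I * φm ↔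
      Real.log (cos t) = Real.log (cos s) + lam ∧ t = s + φm := by
  simp only [grimReaper, Complex.ext_iff, Complex.add_re, Complex.add_im, Complex.sub_re,
    Complex.sub_im, Complex.neg_re, Complex.neg_im, Complex.mul_re, Complex.mul_im,
    Complex.I_re, Complex.I_im, Complex.ofReal_re, Complex.ofReal_im, Complex.div_ofNat_re,
    Complex.div_ofNat_im]
  constructor <;> rintro ⟨h₁, h₂⟩ <;> constructor <;> linarith

lemma eq_zero_of_ofReal_eq_exp_mul_ofReal {θ x y : ℝ} (hθ : sin θ ≠ 0)
    (h : (x : ℂ) = Complex.exp (Complex.I * θ) * y) : x = 0 := by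
  rw [mul_comm Complex.I] at h
  have him := congrArg Complex.im h
  have hre := congrArg Complex.re h
  simp only [Complex.ofReal_im, Complex.ofReal_re, Complex.mul_im, Complex.mul_re,
    Complex.exp_ofReal_mul_I_re, Complex.exp_ofReal_mul_I_im, mul_zero, zero_add, sub_zero]
    at him hre
  have hy : y = 0 := (mul_eq_zero.mp him.symm).resolve_left hθ
  rw [hre, hy, mul_zero]

lemma cos_add_eq_mul_cos_iff {s φ c : ℝ} (hs : cos s ≠ 0) (hφ : sin φ ≠ 0) :
    cos (s + φ) = c * cos s ↔ tan s = (cos φ - c) / sin φ := by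
  rw [cos_add, tan_eq_sin_div_cos, div_eq_div_iff hs hφ]
  constructor <;> intro h <;> linarith

lemma existsUnique_cos_add_eq_mul_cos {φ c : ℝ} (hφ : φ ∈ Ioo 0 π) (hc : 0 < c) :
    ∃! s, s ∈ Ioo (-(π / 2)) (π / 2 - φ) ∧ cos (s + φ) = c * cos s := by
  have hsinφ : sin φ ≠ 0 := (sin_pos_of_pos_of_lt_pi hφ.1 hφ.2).ne'
  set s₀ := arctan ((cos φ - c) / sin φ)
  have hs₀ : s₀ ∈ Ioo (-(π / 2)) (π / 2) := arctan_mem_Ioo _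
  have hcos₀ : 0 < cos s₀ := cos_arctan_pos _
  have heq₀ : cos (s₀ + φ) = c * cos s₀ :=
    (cos_add_eq_mul_cos_iff hcos₀.ne' hsinφ).mpr (tan_arctan _)
  refine ⟨s₀, ⟨⟨hs₀.1, ?_⟩, heq₀⟩, ?_⟩
  · by_contra! h
    have : cos (s₀ + φ) ≤ 0 :=
      cos_nonpos_of_pi_div_two_le_of_le (by linarith) (by linarith [hs₀.2, hφ.2])
    linarith [mul_pos hc hcos₀]
  · rintro t ⟨⟨ht₁, ht₂⟩, heq⟩
    have htan := (cos_add_eq_mul_cos_iff (cos_pos_of_mem_Ioo ⟨ht₁, by linarith [hφ.1]⟩).ne'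
      hsinφ).mp heq
    rw [← arctan_tan ht₁ (by linarith [hφ.1]), htan]

lemma log_eq_add_log_iff {a b l : ℝ} (ha : 0 < a) (hb : 0 < b) :
    Real.log b = Real.log a + l ↔ b = exp l * a := by
  rw [← exp_eq_exp, exp_log hb, exp_add, exp_log ha, mul_comm]

lemma mem_grimCyl_inter_grimCylRot_iff {k : ℕ} {φ : Fin k → ℝ} {φm lam : ℝ}
    (hφ : ∀ j, φ j ∈ Ioo 0 π) (hφm : 0 < φm) {p : (Fin k → ℂ) × ℂ} :
    p ∈ grimCyl k ∩ grimCylRot k φ φm lam ↔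
      ∃ s, (s ∈ Ioo (-(π / 2)) (π / 2 - φm) ∧ cos (s + φm) = exp lam * cos s) ∧
        p = (0, grimReaper s) := by
  constructor
  · rintro ⟨⟨x, s, hs, rfl⟩, ⟨y, t, ht, hp⟩⟩
    obtain ⟨hfst, hsnd⟩ := Prod.ext_iff.mp hp
    obtain ⟨hlog, rfl⟩ := grimReaper_eq_add_iff.mp hsnd
    have hx : x = 0 := funext fun j => eq_zero_of_ofReal_eq_exp_mul_ofReal
      (sin_pos_of_pos_of_lt_pi (hφ j).1 (hφ j).2).ne' (congrFun hfst j)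
    refine ⟨s, ⟨⟨hs.1, by linarith [ht.2]⟩, ?_⟩, by rw [hx]; rfl⟩
    exact (log_eq_add_log_iff (cos_pos_of_mem_Ioo hs) (cos_pos_of_mem_Ioo ht)).mp hlog
  · rintro ⟨s, ⟨⟨hs₁, hs₂⟩, heq⟩, rfl⟩
    have hs : s ∈ Ioo (-(π / 2)) (π / 2) := ⟨hs₁, by linarith⟩
    have hlog := (log_eq_add_log_iff (cos_pos_of_mem_Ioo hs)
      (cos_pos_of_mem_Ioo ⟨by linarith, by linarith⟩)).mpr heq
    refine ⟨⟨0, s, hs, Prod.ext (funext fun _ => Complex.ofReal_zero.symm) rfl⟩,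
      0, s + φm, ⟨by linarith, by linarith⟩, ?_⟩
    exact Prod.ext (funext fun _ => by simp) (grimReaper_eq_add_iff.mpr ⟨hlog, rfl⟩)

/-- `L₀` and `L_φ^λ` intersect in exactly one point, and that point has the
form `(0,…,0,q)`. -/
theorem grimCyl_inter_unique (k : ℕ) (φ : Fin k → ℝ) (φm lam : ℝ)
    (hφ : ∀ j, φ j ∈ Set.Ioo 0 Real.pi) (hφm : φm ∈ Set.Ioo 0 Real.pi) :
    (∃! p, p ∈ grimCyl k ∩ grimCylRot k φ φm lam) ∧
      ∀ p ∈ grimCyl k ∩ grimCylRot k φ φm lam, p.1 = 0 := by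
  simp only [mem_grimCyl_inter_grimCylRot_iff hφ hφm.1]
  obtain ⟨s, hs, huniq⟩ := existsUnique_cos_add_eq_mul_cos hφm (exp_pos lam)
  refine ⟨⟨(0, grimReaper s), ⟨s, hs, rfl⟩, ?_⟩, ?_⟩
  · rintro p ⟨t, ht, rfl⟩
    rw [huniq t ht]
  · rintro p ⟨t, -, rfl⟩
    rfl
end

section
/- Let λ ∈ ℝ and φₘ ∈ (0, π). Then there exists a unique pair (s₀, s₁) ∈ (-π/2, π/2)² with s₁ - s₀ = φₘ and -log cos(s₀) = λ - log cos(s₁). -/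
open Real Set Filter Topology

private lemma grim_anti (φm : ℝ) (h0 : 0 < φm) (hπ : φm < π) :
    StrictAntiOn (fun s => Real.log (Real.cos (s + φm)) - Real.log (Real.cos s))
      (Set.Ioo (-(π/2)) (π/2 - φm)) := by
  intro x hx y hy hxy
  have hcx : 0 < Real.cos x := Real.cos_pos_of_mem_Ioo ⟨hx.1, by linarith [hx.2]⟩
  have hcy : 0 < Real.cos y := Real.cos_pos_of_mem_Ioo ⟨hy.1, by linarith [hy.2]⟩
  have hcx2 : 0 < Real.cos (x + φm) :=
    Real.cos_pos_of_mem_Ioo ⟨by linarith [hx.1], by linarith [hx.2]⟩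
  have hcy2 : 0 < Real.cos (y + φm) :=
    Real.cos_pos_of_mem_Ioo ⟨by linarith [hy.1], by linarith [hy.2]⟩
  have hkey : Real.cos (x + φm) * Real.cos y - Real.cos (y + φm) * Real.cos x
      = Real.sin φm * Real.sin (y - x) := by
    rw [Real.cos_add, Real.cos_add, Real.sin_sub]; ring
  have hs1 : 0 < Real.sin φm := Real.sin_pos_of_pos_of_lt_pi h0 hπ
  have hs2 : 0 < Real.sin (y - x) :=
    Real.sin_pos_of_pos_of_lt_pi (by linarith) (by linarith [hx.1, hy.2])
  have hlt : Real.cos (y + φm) * Real.cos x < Real.cos (x + φm) * Real.cos y := by nlinarith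
  have hlog := Real.log_lt_log (by positivity) hlt
  rw [Real.log_mul (ne_of_gt hcy2) (ne_of_gt hcx),
    Real.log_mul (ne_of_gt hcx2) (ne_of_gt hcy)] at hlog
  simp only
  linarith

/-- For `λ ∈ ℝ` and `φₘ ∈ (0,π)` there is a unique pair
`(s₀, s₁) ∈ (-π/2, π/2)²` with `s₁ - s₀ = φₘ` and
`-log cos s₀ = λ - log cos s₁`. -/
theorem grimReaper_intersection_unique (lam φm : ℝ) (hφm : φm ∈ Set.Ioo 0 Real.pi) :
    ∃! p : ℝ × ℝ, p.1 ∈ Set.Ioo (-(Real.pi / 2)) (Real.pi / 2) ∧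
      p.2 ∈ Set.Ioo (-(Real.pi / 2)) (Real.pi / 2) ∧
      p.2 - p.1 = φm ∧
      -Real.log (Real.cos p.1) = lam - Real.log (Real.cos p.2) := by
  obtain ⟨h0, hπ⟩ := hφm
  have hab : -(π/2) < π/2 - φm := by linarith
  have hcts : Continuous (fun s : ℝ => Real.cos (s + φm)) :=
    Real.continuous_cos.comp (continuous_id.add continuous_const)
  set g : ℝ → ℝ := fun s => Real.log (Real.cos (s + φm)) - Real.log (Real.cos s) with hg
  have hanti : StrictAntiOn g (Set.Ioo (-(π/2)) (π/2 - φm)) := grim_anti φm h0 hπ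
  have hpos1 : ∀ s ∈ Set.Ioo (-(π/2)) (π/2 - φm), 0 < Real.cos s := fun s hs =>
    Real.cos_pos_of_mem_Ioo ⟨hs.1, by linarith [hs.2]⟩
  have hpos2 : ∀ s ∈ Set.Ioo (-(π/2)) (π/2 - φm), 0 < Real.cos (s + φm) := fun s hs =>
    Real.cos_pos_of_mem_Ioo ⟨by linarith [hs.1], by linarith [hs.2]⟩
  have hcont : ContinuousOn g (Set.Ioo (-(π/2)) (π/2 - φm)) := by
    apply ContinuousOn.sub
    · exact hcts.continuousOn.log fun s hs => ne_of_gt (hpos2 s hs)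
    · exact Real.continuous_cos.continuousOn.log fun s hs => ne_of_gt (hpos1 s hs)
  have hsin : 0 < Real.sin φm := Real.sin_pos_of_pos_of_lt_pi h0 hπ
  have hmem_a : Set.Ioo (-(π/2)) (π/2 - φm) ∈ 𝓝[>] (-(π/2)) :=
    Ioo_mem_nhdsGT_of_mem ⟨le_refl _, hab⟩
  have hmem_b : Set.Ioo (-(π/2)) (π/2 - φm) ∈ 𝓝[<] (π/2 - φm) :=
    Ioo_mem_nhdsLT_of_mem ⟨hab, le_refl _⟩
  have hca : Real.cos (-(π/2) + φm) = Real.sin φm := by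
    rw [show -(π/2) + φm = -(π/2 - φm) by ring, Real.cos_neg, Real.cos_pi_div_two_sub]
  have h1a : Tendsto (fun s => Real.log (Real.cos (s + φm))) (𝓝[>] (-(π/2)))
      (𝓝 (Real.log (Real.sin φm))) := by
    have hc : ContinuousAt (fun s => Real.log (Real.cos (s + φm))) (-(π/2)) := by
      apply (Real.continuousAt_log (by rw [hca]; exact ne_of_gt hsin)).comp
      exact hcts.continuousAt
    have h := hc.tendsto.mono_left (nhdsWithin_le_nhds (s := Set.Ioi (-(π/2))))
    rwa [hca] at h
  have h2a : Tendsto (fun s => Real.log (Real.cos s)) (𝓝[>] (-(π/2))) atBot := by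
    apply Real.tendsto_log_nhdsGT_zero.comp
    apply tendsto_nhdsWithin_of_tendsto_nhds_of_eventually_within
    · have hc0 : Real.cos (-(π/2)) = 0 := by rw [Real.cos_neg, Real.cos_pi_div_two]
      have h := (Real.continuous_cos.tendsto (-(π/2))).mono_left
        (nhdsWithin_le_nhds (s := Set.Ioi (-(π/2))))
      rwa [hc0] at h
    · filter_upwards [hmem_a] with s hs
      exact hpos1 s hs
  have hcb : Real.cos (π/2 - φm) = Real.sin φm := Real.cos_pi_div_two_sub φm
  have h1b : Tendsto (fun s => Real.log (Real.cos (s + φm))) (𝓝[<] (π/2 - φm)) atBot := by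
    apply Real.tendsto_log_nhdsGT_zero.comp
    apply tendsto_nhdsWithin_of_tendsto_nhds_of_eventually_within
    · have hcb2 : Real.cos (π/2 - φm + φm) = 0 := by
        rw [show π/2 - φm + φm = π/2 by ring, Real.cos_pi_div_two]
      have h := (hcts.tendsto (π/2 - φm)).mono_left
        (nhdsWithin_le_nhds (s := Set.Iio (π/2 - φm)))
      rwa [hcb2] at h
    · filter_upwards [hmem_b] with s hs
      exact hpos2 s hs
  have h2b : Tendsto (fun s => Real.log (Real.cos s)) (𝓝[<] (π/2 - φm))
      (𝓝 (Real.log (Real.sin φm))) := by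
    have hc : ContinuousAt (fun s => Real.log (Real.cos s)) (π/2 - φm) :=
      (Real.continuousAt_log (by rw [hcb]; exact ne_of_gt hsin)).comp
        Real.continuous_cos.continuousAt
    have h := hc.tendsto.mono_left (nhdsWithin_le_nhds (s := Set.Iio (π/2 - φm)))
    rwa [hcb] at h
  set L := Real.log (Real.sin φm) with hL
  have hx : ∃ x ∈ Set.Ioo (-(π/2)) (π/2 - φm), lam ≤ g x := by
    have hev1 : ∀ᶠ s in 𝓝[>] (-(π/2)), L - 1 < Real.log (Real.cos (s + φm)) :=
      h1a.eventually (eventually_gt_nhds (by linarith))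
    have hev2 : ∀ᶠ s in 𝓝[>] (-(π/2)), Real.log (Real.cos s) < L - 1 - lam :=
      h2a.eventually (eventually_lt_atBot _)
    obtain ⟨x, h1x, h2x, hxm⟩ :=
      (hev1.and (hev2.and (eventually_of_mem hmem_a fun s hs => hs))).exists
    exact ⟨x, hxm, by simp only [hg]; linarith⟩
  have hy : ∃ y ∈ Set.Ioo (-(π/2)) (π/2 - φm), g y ≤ lam := by
    have hev1 : ∀ᶠ s in 𝓝[<] (π/2 - φm), Real.log (Real.cos (s + φm)) < L - 1 + lam :=
      h1b.eventually (eventually_lt_atBot _)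
    have hev2 : ∀ᶠ s in 𝓝[<] (π/2 - φm), L - 1 < Real.log (Real.cos s) :=
      h2b.eventually (eventually_gt_nhds (by linarith))
    obtain ⟨y, h1y, h2y, hym⟩ :=
      (hev1.and (hev2.and (eventually_of_mem hmem_b fun s hs => hs))).exists
    exact ⟨y, hym, by simp only [hg]; linarith⟩
  obtain ⟨x, hxm, hxg⟩ := hx
  obtain ⟨y, hym, hyg⟩ := hy
  have hxy : x ≤ y := by
    by_contra h
    push_neg at h
    have := hanti hym hxm h
    linarith
  have hIcc : Set.Icc x y ⊆ Set.Ioo (-(π/2)) (π/2 - φm) := fun t ht =>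
    ⟨lt_of_lt_of_le hxm.1 ht.1, lt_of_le_of_lt ht.2 hym.2⟩
  have hiv : lam ∈ g '' Set.Icc x y :=
    intermediate_value_Icc' hxy (hcont.mono hIcc) ⟨hyg, hxg⟩
  obtain ⟨s, hsm, hsg⟩ := hiv
  have hs : s ∈ Set.Ioo (-(π/2)) (π/2 - φm) := hIcc hsm
  have hsgl : Real.log (Real.cos (s + φm)) - Real.log (Real.cos s) = lam := hsg
  refine ⟨(s, s + φm), ⟨⟨hs.1, by linarith [hs.2]⟩,
    ⟨by simp only; linarith [hs.1], by simp only; linarith [hs.2]⟩, by simp only; ring,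
    by simp only; linarith⟩, ?_⟩
  rintro ⟨q1, q2⟩ ⟨hq1, hq2, hq3, hq4⟩
  simp only at hq1 hq2 hq3 hq4 ⊢
  have hq2' : q2 = q1 + φm := by linarith [hq3]
  have hq1m : q1 ∈ Set.Ioo (-(π/2)) (π/2 - φm) := ⟨hq1.1, by
    have := hq2.2; rw [hq2'] at this; linarith⟩
  have hgq : g q1 = lam := by
    simp only [hg, ← hq2']
    linarith
  have hq1s : q1 = s := hanti.injOn hq1m hs (by rw [hgq, hsg])
  rw [Prod.mk.injEq]
  exact ⟨hq1s, by rw [hq2', hq1s]⟩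
end
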